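/- Cost lower bound from edges: if a transformation of s1 into s2 has cost c and the induced matching has m matched pairs, of which u pairs match unequal characters, then c ≥ (|s1| - m) + (|s2| - m) + u. In particular, c ≥ |s1| + |s2| - 2m. -/
import Mathlib


/-- `Aligned i j s t M c` : there is a transformation (a sequence of insertions,
deletions and substitutions, processed left to right) of the string `s` into the
string `t`, of cost `c`, whose induced matching (the set of pairs of positions
`(x, y)` such that the character `s[x]` is transformed into `t[y]` by no change or
by a substitution) is `M`; positions in `M` are offset by `i` (in the first
string) and `j` (in the second string). -/
inductive Aligned {α : Type*} : ℕ → ℕ → List α → List α → List (ℕ × ℕ) → ℕ → Prop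
  | nil (i j : ℕ) : Aligned i j [] [] [] 0
  | delete {i j : ℕ} {s t : List α} {M : List (ℕ × ℕ)} {c : ℕ} (a : α) :
      Aligned (i + 1) j s t M c → Aligned i j (a :: s) t M (c + 1)
  | insert {i j : ℕ} {s t : List α} {M : List (ℕ × ℕ)} {c : ℕ} (b : α) :
      Aligned i (j + 1) s t M c → Aligned i j s (b :: t) M (c + 1)
  | substitute {i j : ℕ} {s t : List α} {M : List (ℕ × ℕ)} {c : ℕ} {a b : α} (h : a ≠ b) :
      Aligned (i + 1) (j + 1) s t M c → Aligned i j (a :: s) (b :: t) ((i, j) :: M) (c + 1)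
  | keep {i j : ℕ} {s t : List α} {M : List (ℕ × ℕ)} {c : ℕ} (a : α) :
      Aligned (i + 1) (j + 1) s t M c → Aligned i j (a :: s) (a :: t) ((i, j) :: M) c

lemma aligned_mem_le {α : Type*} {i j : ℕ} {s t : List α} {M : List (ℕ × ℕ)} {c : ℕ}
    (h : Aligned i j s t M c) : ∀ p ∈ M, i ≤ p.1 ∧ j ≤ p.2 := by
  induction h with
  | nil => simp
  | delete a h ih => intro p hp; have := ih p hp; omega
  | insert b h ih => intro p hp; have := ih p hp; omega
  | substitute hne h ih =>
      intro p hp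
      rcases List.mem_cons.1 hp with rfl | hp
      · simp
      · have := ih p hp; omega
  | keep a h ih =>
      intro p hp
      rcases List.mem_cons.1 hp with rfl | hp
      · simp
      · have := ih p hp; omega

lemma aligned_len_le {α : Type*} {i j : ℕ} {s t : List α} {M : List (ℕ × ℕ)} {c : ℕ}
    (h : Aligned i j s t M c) : M.length ≤ s.length ∧ M.length ≤ t.length := by
  induction h with
  | nil => simp
  | delete a h ih => simp; omega
  | insert b h ih => simp; omega
  | substitute hne h ih => simp; omega
  | keep a h ih => simp; omega

lemma aligned_main {α : Type*} [DecidableEq α] {i j : ℕ} {s t : List α}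
    {M : List (ℕ × ℕ)} {c : ℕ} (h : Aligned i j s t M c) :
    (s.length - M.length) + (t.length - M.length) +
      (M.filter (fun p => decide (s[p.1 - i]? ≠ t[p.2 - j]?))).length ≤ c := by
  induction h with
  | nil => simp
  | @delete i j s t M c a h ih =>
      have hmem := aligned_mem_le h
      have hfe : M.filter (fun p => decide ((a :: s)[p.1 - i]? ≠ t[p.2 - j]?)) =
          M.filter (fun p => decide (s[p.1 - (i+1)]? ≠ t[p.2 - (j)]?)) := by
        apply List.filter_congr
        intro p hp
        have h1 := (hmem p hp).1
        have : p.1 - i = (p.1 - (i+1)) + 1 := by omega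
        rw [this, List.getElem?_cons_succ]
      have hlen := (aligned_len_le h).1
      rw [hfe]
      simp only [List.length_cons]
      omega
  | @insert i j s t M c b h ih =>
      have hmem := aligned_mem_le h
      have hfe : M.filter (fun p => decide (s[p.1 - i]? ≠ (b :: t)[p.2 - j]?)) =
          M.filter (fun p => decide (s[p.1 - i]? ≠ t[p.2 - (j+1)]?)) := by
        apply List.filter_congr
        intro p hp
        have h1 := (hmem p hp).2
        have : p.2 - j = (p.2 - (j+1)) + 1 := by omega
        rw [this, List.getElem?_cons_succ]
      have hlen := (aligned_len_le h).2
      rw [hfe]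
      simp only [List.length_cons]
      omega
  | @substitute i j s t M c a b hne h ih =>
      have hmem := aligned_mem_le h
      have hfe : M.filter (fun p => decide ((a :: s)[p.1 - i]? ≠ (b :: t)[p.2 - j]?)) =
          M.filter (fun p => decide (s[p.1 - (i+1)]? ≠ t[p.2 - (j+1)]?)) := by
        apply List.filter_congr
        intro p hp
        have h1 := (hmem p hp).1
        have h2 := (hmem p hp).2
        have e1 : p.1 - i = (p.1 - (i+1)) + 1 := by omega
        have e2 : p.2 - j = (p.2 - (j+1)) + 1 := by omega
        rw [e1, e2, List.getElem?_cons_succ, List.getElem?_cons_succ]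
      have hlen := aligned_len_le h
      rw [List.filter_cons]
      simp only [Nat.sub_self, List.getElem?_cons_zero]
      have : decide (some a ≠ some b) = true := by simp [hne]
      rw [this]
      simp only [if_true, List.length_cons]
      rw [hfe]
      omega
  | @keep i j s t M c a h ih =>
      have hmem := aligned_mem_le h
      have hfe : M.filter (fun p => decide ((a :: s)[p.1 - i]? ≠ (a :: t)[p.2 - j]?)) =
          M.filter (fun p => decide (s[p.1 - (i+1)]? ≠ t[p.2 - (j+1)]?)) := by
        apply List.filter_congr
        intro p hp
        have h1 := (hmem p hp).1
        have h2 := (hmem p hp).2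
        have e1 : p.1 - i = (p.1 - (i+1)) + 1 := by omega
        have e2 : p.2 - j = (p.2 - (j+1)) + 1 := by omega
        rw [e1, e2, List.getElem?_cons_succ, List.getElem?_cons_succ]
      simp only [List.filter_cons, Nat.sub_self, List.getElem?_cons_zero]
      rw [if_neg (by simp)]
      rw [hfe]
      simp only [List.length_cons]
      omega

/-- A transformation of `s` into `t` with induced matching `M` and cost `c`. -/
def Transforms {α : Type*} (s t : List α) (M : List (ℕ × ℕ)) (c : ℕ) : Prop :=
  Aligned 0 0 s t M c

/-- Cost lower bound from edges: if a transformation of `s1` into `s2` has cost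
`c` and the induced matching has `m` matched pairs, of which `u` match unequal
characters, then `c ≥ (|s1| - m) + (|s2| - m) + u`; in particular
`c ≥ |s1| + |s2| - 2m`. -/
theorem cost_lower_bound {α : Type*} [DecidableEq α] {s1 s2 : List α}
    {M : List (ℕ × ℕ)} {c : ℕ} (h : Transforms s1 s2 M c) :
    (s1.length - M.length) + (s2.length - M.length) +
        (M.filter (fun p => decide (s1[p.1]? ≠ s2[p.2]?))).length ≤ c ∧
    s1.length + s2.length ≤ c + 2 * M.length := by
  have hm := aligned_main h
  simp only [Nat.sub_zero] at hm
  have hl := aligned_len_le h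
  exact ⟨hm, by omega⟩
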